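/- Let ABC be a triangle with A = (0,0), C = (1,0), B = (b₁, b₂), b₂ ≠ 0, and with the angles at A and C not right. Let G, H be the feet of the altitudes from A and C. Then a point F = (f₁, f₂) has the property that its orthogonal projections onto lines AC, AG, BC are collinear if and only if f₁² + f₂² = f₁, i.e., F lies on the circle of diameter AC; and the same circle is the locus for collinearity of the projections onto AC, CH, AB. Furthermore, adding the condition that the projections of F onto AB and BC are equidistant from the projection of F onto AC forces f₁ = (b₁² + b₂²)/(1 − 2b₁ + 2b₁² + 2b₂²), so that such a point F inside the triangle is uniquely determined up to reflection in the line AC. -/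

import Mathlib

open scoped RealInnerProductSpace

set_option maxHeartbeats 1000000

noncomputable section

abbrev Pt := EuclideanSpace ℝ (Fin 2)

def mk2 (x y : ℝ) : Pt := (EuclideanSpace.equiv (Fin 2) ℝ).symm ![x, y]

/-- Orthogonal projection of `F` onto the line through `P` with direction `v`. -/
def lineProj (P v F : Pt) : Pt := P + (⟪F - P, v⟫ / ⟪v, v⟫) • v

lemma mk2_app0 (x y : ℝ) : mk2 x y 0 = x := rfl
lemma mk2_app1 (x y : ℝ) : mk2 x y 1 = y := rfl

lemma pt_ext {x y : Pt} (h0 : x 0 = y 0) (h1 : x 1 = y 1) : x = y := by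
  ext i; fin_cases i <;> assumption

lemma pt_inner (x y : Pt) : ⟪x, y⟫ = x 0 * y 0 + x 1 * y 1 := by
  simp [PiLp.inner_apply, RCLike.inner_apply, Fin.sum_univ_two]
  ring

lemma mk2_sub (a b c d : ℝ) : mk2 a b - mk2 c d = mk2 (a-c) (b-d) := by
  apply pt_ext <;> rfl

lemma mk2_congr {a b c d : ℝ} (h1 : a = c) (h2 : b = d) : mk2 a b = mk2 c d := by rw [h1, h2]

lemma lineProj_mk2 (p0 p1 v0 v1 x y S : ℝ) (hS : v0*v0+v1*v1 = S) :
    lineProj (mk2 p0 p1) (mk2 v0 v1) (mk2 x y)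
      = mk2 (p0 + ((x-p0)*v0+(y-p1)*v1)/S*v0) (p1 + ((x-p0)*v0+(y-p1)*v1)/S*v1) := by
  subst hS
  apply pt_ext <;>
    simp [lineProj, pt_inner, mk2_app0, mk2_app1, mk2_sub, PiLp.add_apply, PiLp.smul_apply,
      smul_eq_mul, mk2, EuclideanSpace.equiv, EuclideanSpace.real_norm_sq_eq, Fin.sum_univ_two] <;> left <;> ring

lemma dist_sq (x y : Pt) : dist x y ^ 2 = (x 0 - y 0)^2 + (x 1 - y 1)^2 := by
  rw [EuclideanSpace.dist_eq, Real.sq_sqrt (by positivity)]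
  simp [Fin.sum_univ_two, Real.dist_eq, sq_abs]

lemma collinear_triple_iff (p q r : Pt) :
    Collinear ℝ ({p, q, r} : Set Pt) ↔
      (q 0 - p 0) * (r 1 - p 1) - (q 1 - p 1) * (r 0 - p 0) = 0 := by
  rw [collinear_iff_of_mem (Set.mem_insert p {q, r})]
  constructor
  · rintro ⟨v, hv⟩
    obtain ⟨rq, hq⟩ := hv q (by simp)
    obtain ⟨rr, hr⟩ := hv r (by simp)
    have hq0 : q 0 = rq * v 0 + p 0 := by rw [hq]; simp
    have hq1 : q 1 = rq * v 1 + p 1 := by rw [hq]; simp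
    have hr0 : r 0 = rr * v 0 + p 0 := by rw [hr]; simp
    have hr1 : r 1 = rr * v 1 + p 1 := by rw [hr]; simp
    rw [hq0, hq1, hr0, hr1]; ring
  · intro hdet
    by_cases hqp : q = p
    · refine ⟨r - p, ?_⟩
      intro x hx
      simp only [Set.mem_insert_iff, Set.mem_singleton_iff] at hx
      rcases hx with rfl | rfl | rfl
      · exact ⟨0, by simp⟩
      · exact ⟨0, by simp [hqp]⟩
      · exact ⟨1, by simp⟩
    · refine ⟨q - p, ?_⟩
      intro x hx
      simp only [Set.mem_insert_iff, Set.mem_singleton_iff] at hx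
      have hvne : q 0 - p 0 ≠ 0 ∨ q 1 - p 1 ≠ 0 := by
        by_contra hc
        push_neg at hc
        exact hqp (pt_ext (by linarith [hc.1]) (by linarith [hc.2]))
      rcases hx with rfl | rfl | rfl
      · exact ⟨0, by simp⟩
      · exact ⟨1, by apply pt_ext <;> simp⟩
      · rcases hvne with h0 | h1
        · refine ⟨(x 0 - p 0)/(q 0 - p 0), ?_⟩
          apply pt_ext
          · simp only [vadd_eq_add, PiLp.add_apply, PiLp.smul_apply, PiLp.sub_apply, smul_eq_mul]
            field_simp
            ring
          · simp only [vadd_eq_add, PiLp.add_apply, PiLp.smul_apply, PiLp.sub_apply, smul_eq_mul]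
            field_simp
            linear_combination hdet
        · refine ⟨(x 1 - p 1)/(q 1 - p 1), ?_⟩
          apply pt_ext
          · simp only [vadd_eq_add, PiLp.add_apply, PiLp.smul_apply, PiLp.sub_apply, smul_eq_mul]
            field_simp
            linear_combination -hdet
          · simp only [vadd_eq_add, PiLp.add_apply, PiLp.smul_apply, PiLp.sub_apply, smul_eq_mul]
            field_simp
            ring

lemma factor_iff {c e d : ℝ} (k : ℝ) (hk : k ≠ 0) (hkey : d = k * (c - e)) :
    d = 0 ↔ c = e := by
  rw [hkey, mul_eq_zero, or_iff_right hk, sub_eq_zero]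

/-- Simson-line locus for the triangle `A = (0,0)`, `C = (1,0)`, `B = (b₁, b₂)`:
the projections of `F = (f₁, f₂)` onto the lines `AC`, `AG`, `BC` (where `G`, `H` are
the feet of the altitudes from `A`, `C`) are collinear iff `f₁² + f₂² = f₁`, i.e. iff
`F` lies on the circle with diameter `AC`; the same circle is the locus for the
projections onto `AC`, `CH`, `AB`.  Moreover, if in addition the projections of `F`
onto `AB` and `BC` are equidistant from its projection onto `AC`, then
`f₁ = (b₁² + b₂²)/(1 − 2b₁ + 2b₁² + 2b₂²)`, so such a point `F` is uniquely determined
up to reflection in the line `AC`. -/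
theorem simson_circle_locus_and_uniqueness
    (b₁ b₂ f₁ f₂ : ℝ) (hb₂ : b₂ ≠ 0)
    (A B C F G H : Pt)
    (hA : A = mk2 0 0) (hB : B = mk2 b₁ b₂) (hC : C = mk2 1 0) (hF : F = mk2 f₁ f₂)
    (hAngleA : ⟪B - A, C - A⟫ ≠ 0)   -- the angle at A is not right
    (hAngleC : ⟪A - C, B - C⟫ ≠ 0)   -- the angle at C is not right
    (hG : G = lineProj B (C - B) A)  -- foot of the altitude from A
    (hH : H = lineProj A (B - A) C)  -- foot of the altitude from C
    :
    (Collinear ℝ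
        ({lineProj A (C - A) F, lineProj A (G - A) F, lineProj B (C - B) F} : Set Pt)
      ↔ f₁ ^ 2 + f₂ ^ 2 = f₁) ∧
    (Collinear ℝ
        ({lineProj A (C - A) F, lineProj C (H - C) F, lineProj A (B - A) F} : Set Pt)
      ↔ f₁ ^ 2 + f₂ ^ 2 = f₁) ∧
    (f₁ ^ 2 + f₂ ^ 2 = f₁ →
      dist (lineProj A (C - A) F) (lineProj A (B - A) F)
        = dist (lineProj A (C - A) F) (lineProj B (C - B) F) →
      f₁ = (b₁ ^ 2 + b₂ ^ 2) / (1 - 2 * b₁ + 2 * b₁ ^ 2 + 2 * b₂ ^ 2)) := by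
  have hb2sq : (0:ℝ) < b₂^2 := lt_of_le_of_ne (sq_nonneg b₂) (Ne.symm (pow_ne_zero 2 hb₂))
  have hUpos : (0:ℝ) < b₁^2 + b₂^2 := by nlinarith [sq_nonneg b₁]
  have hU : (b₁^2 + b₂^2) ≠ 0 := ne_of_gt hUpos
  have hWpos : (0:ℝ) < (1-b₁)^2 + b₂^2 := by nlinarith [sq_nonneg (1-b₁)]
  have hW : ((1-b₁)^2 + b₂^2) ≠ 0 := ne_of_gt hWpos
  have hCA : C - A = mk2 1 0 := by
    rw [hA, hC, mk2_sub]; exact mk2_congr (by ring) (by ring)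
  have hBA : B - A = mk2 b₁ b₂ := by
    rw [hA, hB, mk2_sub]; exact mk2_congr (by ring) (by ring)
  have hCB : C - B = mk2 (1-b₁) (-b₂) := by
    rw [hB, hC, mk2_sub]; exact mk2_congr (by ring) (by ring)
  have hACm : A - C = mk2 (-1) 0 := by
    rw [hA, hC, mk2_sub]; exact mk2_congr (by ring) (by ring)
  have hBCm : B - C = mk2 (b₁-1) b₂ := by
    rw [hB, hC, mk2_sub]; exact mk2_congr (by ring) (by ring)
  have hb1 : b₁ ≠ 0 := by
    rw [hBA, hCA, pt_inner, mk2_app0, mk2_app0, mk2_app1, mk2_app1] at hAngleA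
    intro h; exact hAngleA (by rw [h]; ring)
  have h1b : (1:ℝ) - b₁ ≠ 0 := by
    rw [hACm, hBCm, pt_inner, mk2_app0, mk2_app0, mk2_app1, mk2_app1] at hAngleC
    intro h; exact hAngleC (by linear_combination h)
  have hO : lineProj A (C - A) F = mk2 f₁ 0 := by
    rw [hCA, hA, hF, lineProj_mk2 _ _ _ _ _ _ 1 (by norm_num)]
    exact mk2_congr (by ring) (by ring)
  have hGe : G = mk2 (b₂^2/((1-b₁)^2+b₂^2)) (b₂*(1-b₁)/((1-b₁)^2+b₂^2)) := by
    rw [hG, hCB, hB, hA, lineProj_mk2 _ _ _ _ _ _ ((1-b₁)^2+b₂^2) (by ring)]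
    exact mk2_congr (by field_simp; try ring) (by field_simp; try ring)
  have hGA : G - A = mk2 (b₂^2/((1-b₁)^2+b₂^2)) (b₂*(1-b₁)/((1-b₁)^2+b₂^2)) := by
    rw [hGe, hA, mk2_sub]; exact mk2_congr (by ring) (by ring)
  have hP2 : lineProj A (G - A) F
      = mk2 ((b₂*f₂ + b₂^2*f₁ - b₁*b₂*f₂)/((1-b₁)^2+b₂^2))
            ((f₂ + b₂*f₁ - 2*b₁*f₂ - b₁*b₂*f₁ + b₁^2*f₂)/((1-b₁)^2+b₂^2)) := by
    rw [hGA, hA, hF, lineProj_mk2 _ _ _ _ _ _ (b₂^2/((1-b₁)^2+b₂^2)) (by field_simp; try ring)]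
    exact mk2_congr (by field_simp; try ring) (by field_simp; try ring)
  have hP3 : lineProj B (C - B) F
      = mk2 ((f₁ - b₂*f₂ + b₂^2 - 2*b₁*f₁ + b₁*b₂*f₂ + b₁^2*f₁)/((1-b₁)^2+b₂^2))
            ((b₂ - b₂*f₁ + b₂^2*f₂ - b₁*b₂ + b₁*b₂*f₁)/((1-b₁)^2+b₂^2)) := by
    rw [hCB, hB, hF, lineProj_mk2 _ _ _ _ _ _ ((1-b₁)^2+b₂^2) (by ring)]
    exact mk2_congr (by field_simp; try ring) (by field_simp; try ring)
  have hHe : H = mk2 (b₁^2/(b₁^2+b₂^2)) (b₁*b₂/(b₁^2+b₂^2)) := by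
    rw [hH, hBA, hA, hC, lineProj_mk2 _ _ _ _ _ _ (b₁^2+b₂^2) (by ring)]
    exact mk2_congr (by field_simp; try ring) (by field_simp; try ring)
  have hHC : H - C = mk2 (-(b₂^2)/(b₁^2+b₂^2)) (b₁*b₂/(b₁^2+b₂^2)) := by
    rw [hHe, hC, mk2_sub]
    exact mk2_congr (by field_simp; try ring) (by ring)
  have hQ2 : lineProj C (H - C) F
      = mk2 ((b₂^2*f₁ - b₁*b₂*f₂ + b₁^2)/(b₁^2+b₂^2))
            ((b₁*b₂ - b₁*b₂*f₁ + b₁^2*f₂)/(b₁^2+b₂^2)) := by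
    rw [hHC, hC, hF, lineProj_mk2 _ _ _ _ _ _ (b₂^2/(b₁^2+b₂^2)) (by field_simp; try ring)]
    exact mk2_congr (by field_simp; try ring) (by field_simp; try ring)
  have hQ3 : lineProj A (B - A) F
      = mk2 ((b₁*b₂*f₂ + b₁^2*f₁)/(b₁^2+b₂^2)) ((b₂^2*f₂ + b₁*b₂*f₁)/(b₁^2+b₂^2)) := by
    rw [hBA, hA, hF, lineProj_mk2 _ _ _ _ _ _ (b₁^2+b₂^2) (by ring)]
    exact mk2_congr (by field_simp; try ring) (by field_simp; try ring)
  refine ⟨?_, ?_, ?_⟩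
  · rw [hO, hP2, hP3, collinear_triple_iff]
    simp only [mk2_app0, mk2_app1]
    exact factor_iff (b₂*(1-b₁)/((1-b₁)^2+b₂^2))
      (div_ne_zero (mul_ne_zero hb₂ h1b) hW) (by field_simp; try ring)
  · rw [hO, hQ2, hQ3, collinear_triple_iff]
    simp only [mk2_app0, mk2_app1]
    exact factor_iff (-(b₁*b₂)/(b₁^2+b₂^2))
      (div_ne_zero (neg_ne_zero.2 (mul_ne_zero hb1 hb₂)) hU) (by field_simp; try ring)
  · intro hcirc hdist
    rw [hO, hQ3, hP3] at hdist
    have hsq := congrArg (fun x : ℝ => x ^ 2) hdist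
    rw [dist_sq, dist_sq] at hsq
    simp only [mk2_app0, mk2_app1] at hsq
    have key3 : ((f₁ - (b₁*b₂*f₂ + b₁^2*f₁)/(b₁^2+b₂^2))^2
          + (0 - (b₂^2*f₂ + b₁*b₂*f₁)/(b₁^2+b₂^2))^2)
        - ((f₁ - (f₁ - b₂*f₂ + b₂^2 - 2*b₁*f₁ + b₁*b₂*f₂ + b₁^2*f₁)/((1-b₁)^2+b₂^2))^2
          + (0 - (b₂ - b₂*f₁ + b₂^2*f₂ - b₁*b₂ + b₁*b₂*f₁)/((1-b₁)^2+b₂^2))^2)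
        = (b₂^2/((b₁^2+b₂^2)*((1-b₁)^2+b₂^2)))
          * ((1-2*b₁)*(f₁^2+f₂^2-f₁) + (f₁*(1-2*b₁+2*b₁^2+2*b₂^2) - (b₁^2+b₂^2))) := by
      field_simp
      ring
    have h0 : (b₂^2/((b₁^2+b₂^2)*((1-b₁)^2+b₂^2)))
        * ((1-2*b₁)*(f₁^2+f₂^2-f₁) + (f₁*(1-2*b₁+2*b₁^2+2*b₂^2) - (b₁^2+b₂^2))) = 0 := by
      rw [← key3]; linear_combination hsq
    have h1 : (1-2*b₁)*(f₁^2+f₂^2-f₁) + (f₁*(1-2*b₁+2*b₁^2+2*b₂^2) - (b₁^2+b₂^2)) = 0 := by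
      rcases mul_eq_zero.1 h0 with h | h
      · exact absurd h (div_ne_zero (pow_ne_zero 2 hb₂) (mul_ne_zero hU hW))
      · exact h
    have hDpos : (0:ℝ) < 1 - 2*b₁ + 2*b₁^2 + 2*b₂^2 := by
      nlinarith [sq_nonneg (1-b₁), sq_nonneg b₁]
    rw [eq_div_iff (ne_of_gt hDpos)]
    linear_combination h1 - (1-2*b₁)*hcirc
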